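/- (Validity of SOC-RLT constraints.) Let C ⊆ ℝ × ℝ^n be a set of vectors w = (t, x) each satisfying the linear inequality a₁^T x ≤ b₁ t and the second-order-cone inequality ‖d₂ t − C₂^T x‖ ≤ b₂ t − a₂^T x, where a₁, a₂ ∈ ℝ^n, b₁, b₂ ∈ ℝ, d₂ ∈ ℝ^p, and C₂ ∈ ℝ^{n×p}. Then every M ∈ CP(C) with block form M = [[τ, z^T],[z, Z]] (τ ∈ ℝ, z ∈ ℝ^n, Z ∈ S^n) satisfies the linearized SOC-RLT inequality ‖b₁ d₂ τ − d₂ a₁^T z − b₁ C₂^T z + C₂^T Z a₁‖ ≤ b₁b₂ τ − b₁ a₂^T z − b₂ a₁^T z + a₁^T Z a₂. -/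

import Mathlib

open Matrix

/-- The Euclidean norm of a vector in `ℝ^p`. -/
noncomputable def euclNorm {p : ℕ} (x : Fin p → ℝ) : ℝ :=
  Real.sqrt (∑ i, x i ^ 2)

/-- The completely positive cone over a set `C` of vectors: all finite sums
`∑ₖ xᵏ(xᵏ)ᵀ` with each `xᵏ ∈ C`. -/
def CPcone {ι : Type*} [Fintype ι] (C : Set (ι → ℝ)) : Set (Matrix ι ι ℝ) :=
  {X | ∃ (k : ℕ) (v : Fin k → ι → ℝ), (∀ j, v j ∈ C) ∧
    X = ∑ j, Matrix.vecMulVec (v j) (v j)}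

/-- The bordered matrix `[[τ, zᵀ], [z, Z]]`. -/
def borderedMatrix {n : ℕ} (τ : ℝ) (z : Fin n → ℝ) (Z : Matrix (Fin n) (Fin n) ℝ) :
    Matrix (Unit ⊕ Fin n) (Unit ⊕ Fin n) ℝ :=
  Matrix.fromBlocks (Matrix.of fun _ _ => τ) (Matrix.of fun _ j => z j)
    (Matrix.of fun i _ => z i) Z

/-!
Write `M = ∑ₖ wₖwₖᵀ` with `wₖ = (tₖ, xₖ) ∈ C`. Both sides of the claimed inequality are linear in
`M`, and on `wwᵀ` the vector on the left is `(b₁t − a₁ᵀx)(d₂t − C₂ᵀx)` while the right-hand side is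
`(b₁t − a₁ᵀx)(b₂t − a₂ᵀx)`. So the claim is the sum over `k` of the second-order-cone inequality
for `wₖ` scaled by the nonnegative factor `b₁tₖ − a₁ᵀxₖ`, combined with the triangle inequality.
-/

lemma euclNorm_eq_norm {p : ℕ} (x : Fin p → ℝ) : euclNorm x = ‖WithLp.toLp 2 x‖ := by
  simp [euclNorm, EuclideanSpace.norm_eq, sq_abs]

section CPcone

variable {ι : Type*} [Fintype ι]

lemma sum_vecMulVec_self_mulVec {k : ℕ} (v : Fin k → ι → ℝ) (ℓ : ι → ℝ) :
    (∑ j, vecMulVec (v j) (v j)) *ᵥ ℓ = ∑ j, (v j ⬝ᵥ ℓ) • v j := by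
  simp only [sum_mulVec, vecMulVec_mulVec, op_smul_eq_smul]

theorem euclNorm_mulVec_mulVec_le_of_mem_CPcone {p : ℕ} {C : Set (ι → ℝ)} (ℓ h : ι → ℝ)
    (G : Matrix (Fin p) ι ℝ) (hℓ : ∀ w ∈ C, 0 ≤ ℓ ⬝ᵥ w)
    (hG : ∀ w ∈ C, euclNorm (G *ᵥ w) ≤ h ⬝ᵥ w) {M : Matrix ι ι ℝ} (hM : M ∈ CPcone C) :
    euclNorm (G *ᵥ (M *ᵥ ℓ)) ≤ ℓ ⬝ᵥ (M *ᵥ h) := by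
  obtain ⟨k, v, hvC, rfl⟩ := hM
  have hℓv j : 0 ≤ v j ⬝ᵥ ℓ := dotProduct_comm ℓ (v j) ▸ hℓ _ (hvC j)
  calc euclNorm (G *ᵥ ((∑ j, vecMulVec (v j) (v j)) *ᵥ ℓ))
      = ‖∑ j, (v j ⬝ᵥ ℓ) • WithLp.toLp 2 (G *ᵥ v j)‖ := by
        simp only [euclNorm_eq_norm, sum_vecMulVec_self_mulVec, mulVec_sum, mulVec_smul,
          WithLp.toLp_sum, WithLp.toLp_smul]
    _ ≤ ∑ j, (v j ⬝ᵥ ℓ) * ‖WithLp.toLp 2 (G *ᵥ v j)‖ := by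
        refine (norm_sum_le _ _).trans_eq (Finset.sum_congr rfl fun j _ => ?_)
        rw [norm_smul, Real.norm_of_nonneg (hℓv j)]
    _ ≤ ∑ j, (v j ⬝ᵥ ℓ) * (h ⬝ᵥ v j) := by
        gcongr with j
        · exact hℓv j
        · rw [← euclNorm_eq_norm]; exact hG _ (hvC j)
    _ = ℓ ⬝ᵥ ((∑ j, vecMulVec (v j) (v j)) *ᵥ h) := by
        rw [sum_vecMulVec_self_mulVec, dotProduct_sum]
        refine Finset.sum_congr rfl fun j _ => ?_
        rw [dotProduct_smul, smul_eq_mul, dotProduct_comm ℓ, dotProduct_comm h, mul_comm]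

end CPcone

section Bordered

variable {n : ℕ}

lemma sumElim_neg_dotProduct (β : ℝ) (a : Fin n → ℝ) (w : Unit ⊕ Fin n → ℝ) :
    Sum.elim (fun _ => β) (-a) ⬝ᵥ w = β * w (Sum.inl ()) - a ⬝ᵥ (fun j => w (Sum.inr j)) := by
  simp [dotProduct, Fintype.sum_sum_type, sub_eq_add_neg]

lemma fromCols_replicateCol_neg_mulVec {p : ℕ} (d : Fin p → ℝ) (B : Matrix (Fin p) (Fin n) ℝ)
    (w : Unit ⊕ Fin n → ℝ) :
    fromCols (replicateCol Unit d) (-B) *ᵥ w =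
      w (Sum.inl ()) • d - B *ᵥ (fun j => w (Sum.inr j)) := by
  ext i
  simp [mulVec, dotProduct, replicateCol, mul_comm, sub_eq_add_neg]

lemma borderedMatrix_mulVec_sumElim_neg (τ β : ℝ) (z a : Fin n → ℝ)
    (Z : Matrix (Fin n) (Fin n) ℝ) :
    borderedMatrix τ z Z *ᵥ Sum.elim (fun _ => β) (-a) =
      Sum.elim (fun _ => β * τ - a ⬝ᵥ z) (β • z - Z *ᵥ a) := by
  ext (i | i) <;> simp [borderedMatrix, mulVec, dotProduct, mul_comm, sub_eq_add_neg]

end Bordered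

/-- **validity of SOC-RLT constraints.** Suppose every
`w = (t,x) ∈ C ⊆ ℝ × ℝ^n` satisfies the linear inequality `a₁ᵀx ≤ b₁t` and the
second-order-cone inequality `‖d₂t − C₂ᵀx‖ ≤ b₂t − a₂ᵀx`.  Then every
`M = [[τ, zᵀ],[z, Z]] ∈ CP(C)` satisfies the linearized SOC-RLT inequality
`‖b₁d₂τ − d₂a₁ᵀz − b₁C₂ᵀz + C₂ᵀZa₁‖ ≤ b₁b₂τ − b₁a₂ᵀz − b₂a₁ᵀz + a₁ᵀZa₂`. -/
theorem soc_rlt_constraints_valid (n p : ℕ) (C : Set (Unit ⊕ Fin n → ℝ))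
    (a₁ a₂ : Fin n → ℝ) (b₁ b₂ : ℝ) (d₂ : Fin p → ℝ)
    (C₂ : Matrix (Fin n) (Fin p) ℝ)
    (hlin : ∀ w ∈ C, a₁ ⬝ᵥ (fun j => w (Sum.inr j)) ≤ b₁ * w (Sum.inl ()))
    (hsoc : ∀ w ∈ C,
      euclNorm (w (Sum.inl ()) • d₂ - C₂.transpose.mulVec (fun j => w (Sum.inr j))) ≤
        b₂ * w (Sum.inl ()) - a₂ ⬝ᵥ (fun j => w (Sum.inr j)))
    (τ : ℝ) (z : Fin n → ℝ) (Z : Matrix (Fin n) (Fin n) ℝ)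
    (hM : borderedMatrix τ z Z ∈ CPcone C) :
    euclNorm ((b₁ * τ) • d₂ - (a₁ ⬝ᵥ z) • d₂ - b₁ • C₂.transpose.mulVec z +
        C₂.transpose.mulVec (Z.mulVec a₁)) ≤
      b₁ * b₂ * τ - b₁ * (a₂ ⬝ᵥ z) - b₂ * (a₁ ⬝ᵥ z) + a₁ ⬝ᵥ Z.mulVec a₂ := by
  have key := euclNorm_mulVec_mulVec_le_of_mem_CPcone (Sum.elim (fun _ => b₁) (-a₁))
    (Sum.elim (fun _ => b₂) (-a₂)) (fromCols (replicateCol Unit d₂) (-C₂ᵀ))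
    (fun w hw => by rw [sumElim_neg_dotProduct, sub_nonneg]; exact hlin w hw)
    (fun w hw => by
      rw [sumElim_neg_dotProduct, fromCols_replicateCol_neg_mulVec]; exact hsoc w hw) hM
  rw [borderedMatrix_mulVec_sumElim_neg, borderedMatrix_mulVec_sumElim_neg,
    fromCols_replicateCol_neg_mulVec, sumElim_neg_dotProduct] at key
  refine le_of_eq_of_le ?_ (key.trans_eq ?_)
  · simp only [Sum.elim_inl, Sum.elim_inr, mulVec_sub, mulVec_smul]
    congr 1
    module
  · simp only [Sum.elim_inl, Sum.elim_inr, dotProduct_sub, dotProduct_smul, smul_eq_mul]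
    ring
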